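/- For |q|<1, the square of the theta series satisfies $\Big(\sum_{n=-\infty}^{\infty} q^{n^2}\Big)^2 = \Big(\sum_{n=-\infty}^{\infty} q^{2n^2}\Big)^2 + 4q\Big(\sum_{n=0}^{\infty} q^{2n(n+1)}\Big)^2$. -/

import Mathlib

/-!
Expand the square as a double series over `(m, n) ∈ ℤ²` and split it according to the parity of
`m + n`. If `m + n` is even then `(m, n) = (a + b, a - b)` with `m² + n² = 2a² + 2b²`; if it is odd
then `(m, n) = (a + b + 1, a - b)` with `m² + n² = 2a(a + 1) + 2b(b + 1) + 1`. The involution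
`n ↦ -(n + 1)` of `ℤ` preserves `n(n + 1)`, so the bilateral series in `q^{2n(n+1)}` is twice the
one over `ℕ`.
-/

open Filter

theorem summable_norm_pow_of_eventually_natAbs_le {𝕜 : Type*} [NormedDivisionRing 𝕜] {q : 𝕜}
    (hq : ‖q‖ < 1) {c : ℤ → ℕ} (hc : ∀ᶠ n in cofinite, n.natAbs ≤ c n) :
    Summable fun n => ‖q ^ c n‖ := by
  have hgeo : Summable fun n : ℕ => ‖q‖ ^ n := summable_geometric_of_lt_one (norm_nonneg _) hq
  refine .of_norm_bounded_eventually (g := fun n : ℤ => ‖q‖ ^ n.natAbs)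
    (.of_nat_of_neg (by simpa using hgeo) (by simpa using hgeo)) (hc.mono fun n hn => ?_)
  rw [norm_norm, norm_pow]
  exact pow_le_pow_of_le_one (norm_nonneg _) hq.le hn

def addSubEquivEven : ℤ × ℤ ≃ {p : ℤ × ℤ // Even (p.1 + p.2)} where
  toFun p := ⟨(p.1 + p.2, p.1 - p.2), by rw [Int.even_iff]; omega⟩
  invFun p := ((p.1.1 + p.1.2) / 2, (p.1.1 - p.1.2) / 2)
  left_inv p := by ext <;> dsimp only <;> omega
  right_inv := by
    rintro ⟨⟨m, n⟩, h⟩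
    rw [Int.even_iff] at h
    ext <;> dsimp only <;> omega

def addAddOneSubEquivOdd : ℤ × ℤ ≃ {p : ℤ × ℤ // ¬Even (p.1 + p.2)} where
  toFun p := ⟨(p.1 + p.2 + 1, p.1 - p.2), by rw [Int.not_even_iff]; omega⟩
  invFun p := ((p.1.1 + p.1.2 - 1) / 2, (p.1.1 - p.1.2 - 1) / 2)
  left_inv p := by ext <;> dsimp only <;> omega
  right_inv := by
    rintro ⟨⟨m, n⟩, h⟩
    rw [Int.not_even_iff] at h
    ext <;> dsimp only <;> omega

def parityEquiv : (ℤ × ℤ) ⊕ (ℤ × ℤ) ≃ ℤ × ℤ :=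
  (addSubEquivEven.sumCongr addAddOneSubEquivOdd).trans (Equiv.sumCompl _)

theorem tsum_int_prod_split_parity {E : Type*} [NormedAddCommGroup E] [CompleteSpace E]
    {F : ℤ × ℤ → E} (hF : Summable F) :
    ∑' p, F p =
      ∑' p : ℤ × ℤ, F (p.1 + p.2, p.1 - p.2) + ∑' p : ℤ × ℤ, F (p.1 + p.2 + 1, p.1 - p.2) := by
  have hFe := hF.comp_injective parityEquiv.injective
  exact (parityEquiv.tsum_eq F).symm.trans <|
    Summable.tsum_sum (hFe.comp_injective Sum.inl_injective) (hFe.comp_injective Sum.inr_injective)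

theorem natAbs_add_sq_add_natAbs_sub_sq (a b : ℤ) :
    (a + b).natAbs ^ 2 + (a - b).natAbs ^ 2 = 2 * a.natAbs ^ 2 + 2 * b.natAbs ^ 2 := by
  zify
  simp only [sq_abs]
  ring

theorem natAbs_add_add_one_sq_add_natAbs_sub_sq (a b : ℤ) :
    (a + b + 1).natAbs ^ 2 + (a - b).natAbs ^ 2 =
      2 * (a * (a + 1)).natAbs + 2 * (b * (b + 1)).natAbs + 1 := by
  have ha : 0 ≤ a * (a + 1) := by rcases le_or_gt 0 a with h | h <;> nlinarith
  have hb : 0 ≤ b * (b + 1) := by rcases le_or_gt 0 b with h | h <;> nlinarith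
  zify
  simp only [sq_abs, abs_of_nonneg ha, abs_of_nonneg hb]
  ring

theorem natAbs_le_two_mul_natAbs_mul_add_one {n : ℤ} (hn : n ≠ -1) :
    n.natAbs ≤ 2 * (n * (n + 1)).natAbs := by
  have := Nat.le_mul_of_pos_right n.natAbs (show 0 < (n + 1).natAbs by omega)
  rw [Int.natAbs_mul]
  omega

theorem natAbs_natCast_mul_add_one (n : ℕ) : ((n : ℤ) * (n + 1)).natAbs = n * (n + 1) := by
  norm_cast

theorem natAbs_neg_add_one_mul_add_one (n : ℕ) :
    ((-(n + 1) : ℤ) * (-(n + 1) + 1)).natAbs = n * (n + 1) := by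
  rw [← natAbs_natCast_mul_add_one]
  congr 1
  ring

theorem tsum_int_natAbs_mul_add_one {M : Type*} [AddCommMonoid M] [TopologicalSpace M]
    [ContinuousAdd M] [T2Space M] {f : ℕ → M} (hf : Summable fun n : ℕ => f (n * (n + 1))) :
    ∑' n : ℤ, f (n * (n + 1)).natAbs = 2 • ∑' n : ℕ, f (n * (n + 1)) := by
  rw [two_nsmul]
  refine (HasSum.of_nat_of_neg_add_one ?_ ?_).tsum_eq <;> refine hf.hasSum.congr_fun fun n => ?_
  · rw [natAbs_natCast_mul_add_one]
  · rw [natAbs_neg_add_one_mul_add_one]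

theorem summable_norm_pow_two_mul_natAbs_mul_add_one {𝕜 : Type*} [NormedDivisionRing 𝕜] {q : 𝕜}
    (hq : ‖q‖ < 1) : Summable fun n : ℤ => ‖q ^ (2 * (n * (n + 1)).natAbs)‖ :=
  summable_norm_pow_of_eventually_natAbs_le hq
    ((eventually_cofinite_ne (-1)).mono fun _ => natAbs_le_two_mul_natAbs_mul_add_one)

theorem tsum_int_pow_two_mul_natAbs_mul_add_one {𝕜 : Type*} [NormedDivisionRing 𝕜]
    [CompleteSpace 𝕜] {q : 𝕜} (hq : ‖q‖ < 1) :
    ∑' n : ℤ, q ^ (2 * (n * (n + 1)).natAbs) = 2 * ∑' n : ℕ, q ^ (2 * n * (n + 1)) := by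
  have hS : Summable fun n : ℕ => q ^ (2 * (n * (n + 1))) :=
    ((summable_norm_pow_two_mul_natAbs_mul_add_one hq).of_norm.comp_injective
      Nat.cast_injective).congr fun n => by simp only [Function.comp, natAbs_natCast_mul_add_one]
  simp only [mul_assoc 2]
  rw [tsum_int_natAbs_mul_add_one (f := fun k => q ^ (2 * k)) hS, two_nsmul, two_mul]

theorem stmt3 (q : ℂ) (hq : ‖q‖ < 1) :
    (∑' n : ℤ, q ^ (n.natAbs ^ 2)) ^ 2 =
    (∑' n : ℤ, q ^ (2 * n.natAbs ^ 2)) ^ 2 +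
      4 * q * (∑' n : ℕ, q ^ (2 * n * (n + 1))) ^ 2 := by
  have hf : Summable fun n : ℤ => ‖q ^ n.natAbs ^ 2‖ :=
    summable_norm_pow_of_eventually_natAbs_le hq (.of_forall fun n => Nat.le_self_pow two_ne_zero _)
  have hg : Summable fun n : ℤ => ‖q ^ (2 * n.natAbs ^ 2)‖ :=
    summable_norm_pow_of_eventually_natAbs_le hq (.of_forall fun n =>
      (Nat.le_self_pow two_ne_zero _).trans (Nat.le_mul_of_pos_left _ two_pos))
  have hh := summable_norm_pow_two_mul_natAbs_mul_add_one hq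
  have heven (p : ℤ × ℤ) : q ^ (p.1 + p.2).natAbs ^ 2 * q ^ (p.1 - p.2).natAbs ^ 2 =
      q ^ (2 * p.1.natAbs ^ 2) * q ^ (2 * p.2.natAbs ^ 2) := by
    rw [← pow_add, ← pow_add, natAbs_add_sq_add_natAbs_sub_sq]
  have hodd (p : ℤ × ℤ) : q ^ (p.1 + p.2 + 1).natAbs ^ 2 * q ^ (p.1 - p.2).natAbs ^ 2 =
      q * (q ^ (2 * (p.1 * (p.1 + 1)).natAbs) * q ^ (2 * (p.2 * (p.2 + 1)).natAbs)) := by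
    rw [← pow_add, ← pow_add, natAbs_add_add_one_sq_add_natAbs_sub_sq, pow_succ, mul_comm]
  have hF := summable_mul_of_summable_norm hf hf
  calc (∑' n : ℤ, q ^ n.natAbs ^ 2) ^ 2
      = ∑' p : ℤ × ℤ, q ^ p.1.natAbs ^ 2 * q ^ p.2.natAbs ^ 2 := by
        rw [sq, tsum_mul_tsum_of_summable_norm hf hf]
    _ = ∑' p : ℤ × ℤ, q ^ (2 * p.1.natAbs ^ 2) * q ^ (2 * p.2.natAbs ^ 2) +
          q * ∑' p : ℤ × ℤ,
            q ^ (2 * (p.1 * (p.1 + 1)).natAbs) * q ^ (2 * (p.2 * (p.2 + 1)).natAbs) := by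
        rw [tsum_int_prod_split_parity hF, ← tsum_mul_left]
        exact congrArg₂ (· + ·) (tsum_congr heven) (tsum_congr hodd)
    _ = _ := by
        rw [← tsum_mul_tsum_of_summable_norm hg hg, ← tsum_mul_tsum_of_summable_norm hh hh,
          tsum_int_pow_two_mul_natAbs_mul_add_one hq]
        ring
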